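/- (Graph augmentation preserves and reflects derivable traces, the invariant behind line 12 of the algorithm.) Let G = (N, Σ ∪ N, P, S) be a context-free grammar whose terminal alphabet is enlarged to Σ ∪ N (each nonterminal A also acting as an edge label), let D ⊆ V × (Σ ∪ N) × V be a data graph, let A ∈ N, and let w, v be vertices such that there exists a terminal string t ∈ Σ* with A ⇒* t and t ∈ traces(paths(w, v)) in D. Let D' = D ∪ {(w, A, v)}. Then for all vertices x, y and every string α over Σ ∪ N: there exists s with α ⇒* s and s a trace of a path from x to y in D' using edges of D together with the new edge (w, A, v) interpreted as an A-derivable step, if and only if there exists s' with α ⇒* s' and s' ∈ traces(paths(x, y)) in D. In particular, adding the edge (w, A, v) to D does not change, for any query pair, the set of vertices reachable by α-derivable paths. -/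

import Mathlib

/-
Every use of the added edge `(w, X, v)` can be replaced by a path from `w` to `v` in `D` whose
trace `u` satisfies `X ⇒* u`. This turns a path of the augmented graph with trace `s` into a
path of `D` with a trace `s'` such that `s ⇒* s'`, and `α ⇒* s ⇒* s'`. The converse holds
because `D` is a subgraph of the augmented graph.
-/

/-- `HasTrace D x s y` : `s` is the trace of some path in the data graph `D` from `x` to `y`. -/
inductive HasTrace {V E : Type*} (D : Set (V × E × V)) : V → List E → V → Prop
  | nil (x : V) : HasTrace D x [] x
  | cons {x y z : V} {p : E} {s : List E} :
      (x, p, y) ∈ D → HasTrace D y s z → HasTrace D x (p :: s) z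

namespace ContextFreeGrammar

variable {T : Type*} {g : ContextFreeGrammar T}

lemma Derives.append {u u' v v' : List (Symbol T g.NT)} (hu : g.Derives u u')
    (hv : g.Derives v v') : g.Derives (u ++ v) (u' ++ v') :=
  (hv.append_left u).trans (hu.append_right v')

end ContextFreeGrammar

namespace HasTrace

variable {V E : Type*}

lemma mono {D D' : Set (V × E × V)} (hDD' : D ⊆ D') {x y : V} {s : List E}
    (h : HasTrace D x s y) : HasTrace D' x s y := by
  induction h with
  | nil x => exact .nil x
  | cons he _ ih => exact .cons (hDD' he) ih

lemma append {D : Set (V × E × V)} {x y z : V} {s t : List E}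
    (hs : HasTrace D x s y) (ht : HasTrace D y t z) : HasTrace D x (s ++ t) z := by
  induction hs with
  | nil => exact ht
  | cons he _ ih => exact .cons he (ih ht)

lemma exists_derives_of_union_singleton {T : Type*} {g : ContextFreeGrammar T}
    {D : Set (V × Symbol T g.NT × V)} {w v x y : V} {X : Symbol T g.NT}
    {s u : List (Symbol T g.NT)} (hs : HasTrace (D ∪ {(w, X, v)}) x s y)
    (hXu : g.Derives [X] u) (hu : HasTrace D w u v) :
    ∃ s', g.Derives s s' ∧ HasTrace D x s' y := by
  induction hs with
  | nil x => exact ⟨[], .refl _, .nil x⟩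
  | @cons a b _ p _ he _ ih =>
    obtain ⟨s', hss', hs'⟩ := ih
    rcases he with he | he
    · exact ⟨p :: s', (ContextFreeGrammar.Derives.refl [p]).append hss', .cons he hs'⟩
    · obtain ⟨rfl, rfl, rfl⟩ : a = w ∧ p = X ∧ b = v := by simpa [Prod.ext_iff] using he
      exact ⟨u ++ s', hXu.append hss', hu.append hs'⟩

end HasTrace

theorem augment_preserves_reach {T V : Type*} (g : ContextFreeGrammar T)
    (D : Set (V × Symbol T g.NT × V)) (A : g.NT) (w v : V)
    (h : ∃ t : List T, g.Derives [Symbol.nonterminal A] (t.map Symbol.terminal) ∧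
        HasTrace D w (t.map Symbol.terminal) v) :
    ∀ (x y : V) (α : List (Symbol T g.NT)),
      (∃ s : List (Symbol T g.NT), g.Derives α s ∧
          HasTrace (D ∪ {(w, Symbol.nonterminal A, v)}) x s y) ↔
      (∃ s' : List (Symbol T g.NT), g.Derives α s' ∧ HasTrace D x s' y) := by
  obtain ⟨t, hAt, ht⟩ := h
  intro x y α
  constructor
  · rintro ⟨s, hαs, hs⟩
    obtain ⟨s', hss', hs'⟩ := hs.exists_derives_of_union_singleton hAt ht
    exact ⟨s', hαs.trans hss', hs'⟩
  · rintro ⟨s', hαs', hs'⟩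
    exact ⟨s', hαs', hs'.mono Set.subset_union_left⟩
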